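/- arXiv:1305.1860 — 7 statements merged into one kernel-verified Lean document; each statement's English description precedes it below -/
import Mathlib

section
/- Let n be a natural number and let L_1,…,L_n be functions from (0,∞) to (−∞,∞] such that for each j there exists t > 0 with L_j(t) < ∞. Then for every u ∈ ℝ, the generalized inverse of the Legendre–Fenchel transform of the Hölder convolution equals the sum of the generalized inverses: (L_1 ⊞ ⋯ ⊞ L_n)^{*←}(u) = L_1^{*←}(u) + ⋯ + L_n^{*←}(u) (the sum being well defined in [−∞,∞] since each summand is < ∞). -/
open Set MeasureTheory Filter

/-- Legendre–Fenchel transform `L^*(x) = sup_{t>0} [t·x − L(t)]`, with values in `[-∞,∞]`. -/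
noncomputable def LF (L : ℝ → EReal) (x : ℝ) : EReal :=
  ⨆ (t : ℝ) (_ : 0 < t), ((t * x : ℝ) : EReal) - L t

/-- Smallest generalized inverse `L^{*←}(u) = inf {x ∈ ℝ : L^*(x) ≥ u}`, with `inf ∅ = ∞`. -/
noncomputable def geInv (L : ℝ → EReal) (u : ℝ) : EReal :=
  sInf ((fun x : ℝ => (x : EReal)) '' {x : ℝ | (u : EReal) ≤ LF L x})

/-- Largest generalized inverse `L^{*⇐}(u) = inf {x ∈ ℝ : L^*(x) > u}`, with `inf ∅ = ∞`. -/
noncomputable def tgeInv (L : ℝ → EReal) (u : ℝ) : EReal :=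
  sInf ((fun x : ℝ => (x : EReal)) '' {x : ℝ | (u : EReal) < LF L x})

/-- Hölder convolution `(L_1 ⊞ ⋯ ⊞ L_n)(t) = inf { Σ_j α_j L_j(t/α_j) : α_j > 0, Σ_j α_j = 1 }`,
with `inf ∅ = ∞`. -/
noncomputable def hconv (n : ℕ) (L : Fin n → ℝ → EReal) (t : ℝ) : EReal :=
  ⨅ (α : Fin n → ℝ) (_ : (∀ j, 0 < α j) ∧ ∑ j, α j = 1),
    ∑ j, (α j : EReal) * L j (t / α j)

/-- Cramér–Chernoff function `L_X(t) = ln E e^{tX}`, with values in `(-∞,∞]`. -/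
noncomputable def cramer {Ω : Type*} [MeasurableSpace Ω] (μ : Measure Ω) (X : Ω → ℝ)
    (t : ℝ) : EReal :=
  ENNReal.log (∫⁻ ω, ENNReal.ofReal (Real.exp (t * X ω)) ∂μ)

/-! The strict superlevel set `{x | u < (L_1 ⊞ ⋯ ⊞ L_n)^*(x)}` is the Minkowski sum of the sets
`{y | u < L_j^*(y)}`. If slopes `t_j` witness `u < L_j^*(y_j)`, the harmonic slope
`t = (Σ_j 1/t_j)⁻¹` with weights `α_j = t/t_j` witnesses `u < (⊞ L)^*(Σ_j y_j)`; conversely, a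
near-optimal weight vector `α` at a slope `t` splits `x` into pieces `y_j` with slopes `t/α_j`,
each carrying the same surplus over `u`. The generalized inverses are recovered by approximating
`u` from below, and sums in `EReal` by sums of reals. -/

namespace EReal

lemma coe_finset_sum {ι : Type*} (s : Finset ι) (f : ι → ℝ) :
    ((∑ i ∈ s, f i : ℝ) : EReal) = ∑ i ∈ s, (f i : EReal) :=
  map_sum (⟨⟨Real.toEReal, coe_zero⟩, coe_add⟩ : ℝ →+ EReal) f s

lemma exists_real_lt_of_lt_add {r : ℝ} {a b : EReal} (h : (r : EReal) < a + b) :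
    ∃ p q : ℝ, (p : EReal) < a ∧ (q : EReal) < b ∧ r < p + q := by
  obtain ⟨p, hrp, hpa⟩ := exists_between_coe_real (sub_lt_of_lt_add h)
  have hrpb : (r : EReal) < p + b :=
    (sub_lt_iff (.inr (coe_ne_bot r)) (.inr (coe_ne_top r))).1 hrp
  obtain ⟨q, hrq, hqb⟩ := exists_between_coe_real (sub_lt_of_lt_add' hrpb)
  rw [← coe_sub, EReal.coe_lt_coe_iff] at hrq
  exact ⟨p, q, hpa, hqb, by linarith⟩

lemma exists_lt_real_of_add_lt {r : ℝ} {a b : EReal} (ha : a ≠ ⊤) (hb : b ≠ ⊤)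
    (h : a + b < r) : ∃ p q : ℝ, a < p ∧ b < q ∧ p + q < r := by
  obtain ⟨p, hap, hpr⟩ :=
    exists_between_coe_real ((EReal.lt_sub_iff_add_lt (.inr ha) (.inl hb)).2 h)
  have hbpr : b + p < r := by
    rw [add_comm]
    exact add_lt_of_lt_sub hpr
  obtain ⟨q, hbq, hqr⟩ := exists_between_coe_real
    ((EReal.lt_sub_iff_add_lt (.inl (coe_ne_bot p)) (.inl (coe_ne_top p))).2 hbpr)
  rw [← coe_sub, EReal.coe_lt_coe_iff] at hqr
  exact ⟨p, q, hap, hbq, by linarith⟩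

lemma exists_real_lt_of_lt_sum {ι : Type*} (s : Finset ι) (b : ι → EReal) {r : ℝ}
    (h : (r : EReal) < ∑ i ∈ s, b i) :
    ∃ c : ι → ℝ, (∀ i ∈ s, (c i : EReal) < b i) ∧ r < ∑ i ∈ s, c i := by
  classical
  induction s using Finset.induction_on generalizing r with
  | empty => exact ⟨0, by simp, by simpa using h⟩
  | insert a s ha ih =>
    rw [Finset.sum_insert ha] at h
    obtain ⟨p, q, hp, hq, hrpq⟩ := exists_real_lt_of_lt_add h
    obtain ⟨c, hc, hqc⟩ := ih hq
    refine ⟨Function.update c a p, fun i hi => ?_, ?_⟩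
    · rcases Finset.mem_insert.1 hi with rfl | hi
      · simpa using hp
      · rw [Function.update_of_ne (ne_of_mem_of_not_mem hi ha)]
        exact hc i hi
    · rw [Finset.sum_insert ha, Function.update_self, Finset.sum_update_of_notMem ha]
      linarith

lemma exists_lt_real_of_sum_lt {ι : Type*} (s : Finset ι) (b : ι → EReal)
    (hb : ∀ i ∈ s, b i ≠ ⊤) {r : ℝ} (h : ∑ i ∈ s, b i < r) :
    ∃ c : ι → ℝ, (∀ i ∈ s, b i < c i) ∧ ∑ i ∈ s, c i < r := by
  classical
  induction s using Finset.induction_on generalizing r with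
  | empty => exact ⟨0, by simp, by simpa using h⟩
  | insert a s ha ih =>
    have hs : ∑ i ∈ s, b i ≠ ⊤ := Finset.sum_induction b (· ≠ ⊤)
      (fun _ _ hx hy => (add_lt_top hx hy).ne) zero_ne_top
      fun i hi => hb i (Finset.mem_insert_of_mem hi)
    rw [Finset.sum_insert ha] at h
    obtain ⟨p, q, hp, hq, hpqr⟩ :=
      exists_lt_real_of_add_lt (hb a (Finset.mem_insert_self a s)) hs h
    obtain ⟨c, hc, hcq⟩ := ih (fun i hi => hb i (Finset.mem_insert_of_mem hi)) hq
    refine ⟨Function.update c a p, fun i hi => ?_, ?_⟩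
    · rcases Finset.mem_insert.1 hi with rfl | hi
      · simpa using hp
      · rw [Function.update_of_ne (ne_of_mem_of_not_mem hi ha)]
        exact hc i hi
    · rw [Finset.sum_insert ha, Function.update_self, Finset.sum_update_of_notMem ha]
      linarith

end EReal

open EReal

lemma lf_mono (L : ℝ → EReal) : Monotone (LF L) := by
  intro x y hxy
  refine iSup₂_mono fun t ht => EReal.sub_le_sub ?_ le_rfl
  exact EReal.coe_le_coe_iff.2 (mul_le_mul_of_nonneg_left hxy ht.le)

lemma lt_lf_iff {L : ℝ → EReal} {u x : ℝ} :
    (u : EReal) < LF L x ↔ ∃ t, 0 < t ∧ L t < ((t * x - u : ℝ) : EReal) := by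
  simp only [LF, lt_iSup_iff, exists_prop]
  refine exists_congr fun t => and_congr_right fun _ => ?_
  rw [EReal.lt_sub_iff_add_lt (.inr (coe_ne_top u)) (.inr (coe_ne_bot u)), coe_sub,
    EReal.lt_sub_iff_add_lt (.inl (coe_ne_bot u)) (.inl (coe_ne_top u)), add_comm]

lemma geInv_le {L : ℝ → EReal} {u x : ℝ} (h : (u : EReal) ≤ LF L x) : geInv L u ≤ x :=
  sInf_le ⟨x, h, rfl⟩

lemma lf_lt_of_lt_geInv {L : ℝ → EReal} {u x : ℝ} (h : (x : EReal) < geInv L u) :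
    LF L x < u :=
  lt_of_not_ge fun hx => h.not_ge (geInv_le hx)

lemma exists_lt_of_geInv_lt {L : ℝ → EReal} {u c : ℝ} (h : geInv L u < c) :
    ∃ y : ℝ, (u : EReal) ≤ LF L y ∧ y < c := by
  obtain ⟨_, ⟨y, hy, rfl⟩, hyc⟩ := sInf_lt_iff.1 h
  exact ⟨y, hy, EReal.coe_lt_coe_iff.1 hyc⟩

lemma geInv_ne_top {L : ℝ → EReal} (h : ∃ t, 0 < t ∧ L t ≠ ⊤) (u : ℝ) : geInv L u ≠ ⊤ := by
  obtain ⟨t, ht, hLt⟩ := h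
  obtain ⟨r, hr, -⟩ := EReal.lt_iff_exists_real_btwn.1 hLt.lt_top
  have hx : t * ((r + u) / t) - u = r := by field_simp; ring
  have hlt : (u : EReal) < LF L ((r + u) / t) := lt_lf_iff.2 ⟨t, ht, by rwa [hx]⟩
  exact ne_top_of_le_ne_top (coe_ne_top _) (geInv_le hlt.le)

lemma hconv_le {n : ℕ} (L : Fin n → ℝ → EReal) (t : ℝ) {α : Fin n → ℝ}
    (hα : ∀ j, 0 < α j) (hsum : ∑ j, α j = 1) :
    hconv n L t ≤ ∑ j, (α j : EReal) * L j (t / α j) :=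
  iInf₂_le α ⟨hα, hsum⟩

lemma exists_weights_of_hconv_lt {n : ℕ} {L : Fin n → ℝ → EReal}
    (hbot : ∀ j, ∀ t : ℝ, 0 < t → L j t ≠ ⊥) {t r : ℝ} (ht : 0 < t) (h : hconv n L t < r) :
    ∃ α : Fin n → ℝ, (∀ j, 0 < α j) ∧ ∑ j, α j = 1 ∧
      ∃ ℓ : Fin n → ℝ, (∀ j, L j (t / α j) = ℓ j) ∧ ∑ j, α j * ℓ j < r := by
  obtain ⟨α, hlt⟩ := iInf_lt_iff.1 h
  obtain ⟨⟨hα, hsum⟩, hlt⟩ := iInf_lt_iff.1 hlt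
  have hbot' : ∀ j, L j (t / α j) ≠ ⊥ := fun j => hbot j _ (div_pos ht (hα j))
  have hterm_bot : ∀ j, (α j : EReal) * L j (t / α j) ≠ ⊥ := fun j =>
    (mul_ne_bot _ _).2 ⟨.inl (coe_ne_bot _), .inr (hbot' j), .inl (coe_ne_top _),
      .inl (EReal.coe_nonneg.2 (hα j).le)⟩
  -- a single infinite term would make the whole sum infinite, as no term is `⊥`
  have htop : ∀ j, L j (t / α j) ≠ ⊤ := by
    intro j hj
    rw [← Finset.add_sum_erase _ _ (Finset.mem_univ j), hj, coe_mul_top_of_pos (hα j),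
      top_add_of_ne_bot] at hlt
    · exact not_top_lt hlt
    · exact WithBot.sum_eq_bot_iff.not.2 fun ⟨i, _, hi⟩ => hterm_bot i hi
  refine ⟨α, hα, hsum, fun j => (L j (t / α j)).toReal,
    fun j => (coe_toReal (htop j) (hbot' j)).symm, ?_⟩
  simp_rw [← EReal.coe_lt_coe_iff, coe_finset_sum, coe_mul, coe_toReal (htop _) (hbot' _)]
  exact hlt

lemma lt_lf_hconv_sum {n : ℕ} (hn : 0 < n) (L : Fin n → ℝ → EReal) {u : ℝ} {y : Fin n → ℝ}
    (hy : ∀ j, (u : EReal) < LF (L j) (y j)) :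
    (u : EReal) < LF (hconv n L) (∑ j, y j) := by
  choose s hs hLs using fun j => lt_lf_iff.1 (hy j)
  choose ℓ hLℓ hℓ using fun j => EReal.lt_iff_exists_real_btwn.1 (hLs j)
  have hne : (Finset.univ : Finset (Fin n)).Nonempty := Finset.univ_nonempty_iff.2 ⟨⟨0, hn⟩⟩
  set t := (∑ j, (s j)⁻¹)⁻¹
  have ht : 0 < t := inv_pos.2 (Finset.sum_pos (fun j _ => inv_pos.2 (hs j)) hne)
  set α : Fin n → ℝ := fun j => t / s j
  have hα : ∀ j, 0 < α j := fun j => div_pos ht (hs j)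
  have hαs : ∀ j, α j * s j = t := fun j => div_mul_cancel₀ t (hs j).ne'
  have hsum : ∑ j, α j = 1 := by
    simp only [α, div_eq_mul_inv, ← Finset.mul_sum]
    exact inv_mul_cancel₀ (inv_pos.1 ht).ne'
  refine lt_lf_iff.2 ⟨t, ht, ?_⟩
  calc hconv n L t ≤ ∑ j, (α j : EReal) * L j (t / α j) := hconv_le L t hα hsum
    _ ≤ ((∑ j, α j * ℓ j : ℝ) : EReal) := by
        rw [coe_finset_sum]
        refine Finset.sum_le_sum fun j _ => ?_
        rw [show t / α j = s j from div_div_cancel₀ ht.ne', EReal.coe_mul]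
        exact mul_le_mul_of_nonneg_left (hLℓ j).le (EReal.coe_nonneg.2 (hα j).le)
    _ < ((t * ∑ j, y j - u : ℝ) : EReal) := by
        rw [EReal.coe_lt_coe_iff]
        calc ∑ j, α j * ℓ j < ∑ j, α j * (s j * y j - u) :=
              Finset.sum_lt_sum_of_nonempty hne fun j _ =>
                mul_lt_mul_of_pos_left (EReal.coe_lt_coe_iff.1 (hℓ j)) (hα j)
          _ = ∑ j, (t * y j - α j * u) :=
              Finset.sum_congr rfl fun j _ => by rw [← hαs j]; ring
          _ = t * ∑ j, y j - u := by
              rw [Finset.sum_sub_distrib, ← Finset.mul_sum, ← Finset.sum_mul, hsum, one_mul]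

lemma exists_sum_eq_of_lt_lf_hconv {n : ℕ} {L : Fin n → ℝ → EReal}
    (hbot : ∀ j, ∀ t : ℝ, 0 < t → L j t ≠ ⊥) {u x : ℝ}
    (h : (u : EReal) < LF (hconv n L) x) :
    ∃ y : Fin n → ℝ, ∑ j, y j = x ∧ ∀ j, (u : EReal) < LF (L j) (y j) := by
  obtain ⟨t, ht, hlt⟩ := lt_lf_iff.1 h
  obtain ⟨α, hα, hsum, ℓ, hℓ, hαℓ⟩ := exists_weights_of_hconv_lt hbot ht hlt
  set c := t * x - ∑ j, α j * ℓ j with hc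
  refine ⟨fun j => α j * (c + ℓ j) / t, ?_, fun j =>
    lt_lf_iff.2 ⟨t / α j, div_pos ht (hα j), ?_⟩⟩
  · rw [← Finset.sum_div, div_eq_iff ht.ne']
    simp only [mul_add, Finset.sum_add_distrib, ← Finset.sum_mul, hsum, hc]
    ring
  · have hslope : t / α j * (α j * (c + ℓ j) / t) = c + ℓ j := by
      field_simp [(hα j).ne', ht.ne']
    rw [hℓ, EReal.coe_lt_coe_iff, hslope]
    linarith

lemma le_lf_hconv_sum {n : ℕ} (hn : 0 < n) (L : Fin n → ℝ → EReal) {u : ℝ} {y : Fin n → ℝ}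
    (hy : ∀ j, (u : EReal) ≤ LF (L j) (y j)) :
    (u : EReal) ≤ LF (hconv n L) (∑ j, y j) :=
  ge_of_forall_gt_iff_ge.1 fun _ hv => (lt_lf_hconv_sum hn L fun j => hv.trans_le (hy j)).le

lemma geInv_hconv_le_sum {n : ℕ} (hn : 0 < n) (L : Fin n → ℝ → EReal)
    (hfin : ∀ j, ∃ t : ℝ, 0 < t ∧ L j t ≠ ⊤) (u : ℝ) :
    geInv (hconv n L) u ≤ ∑ j, geInv (L j) u := by
  refine le_of_forall_lt_iff_le.1 fun z hz => ?_
  obtain ⟨c, hc, hcz⟩ :=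
    exists_lt_real_of_sum_lt _ _ (fun j _ => geInv_ne_top (hfin j) u) hz
  choose y hy hyc using fun j => exists_lt_of_geInv_lt (hc j (Finset.mem_univ j))
  calc geInv (hconv n L) u ≤ ((∑ j, y j : ℝ) : EReal) := geInv_le (le_lf_hconv_sum hn L hy)
    _ ≤ z := EReal.coe_le_coe_iff.2 ((Finset.sum_le_sum fun j _ => (hyc j).le).trans hcz.le)

lemma sum_geInv_le_geInv_hconv {n : ℕ} {L : Fin n → ℝ → EReal}
    (hbot : ∀ j, ∀ t : ℝ, 0 < t → L j t ≠ ⊥) (u : ℝ) :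
    ∑ j, geInv (L j) u ≤ geInv (hconv n L) u := by
  refine le_sInf ?_
  rintro _ ⟨x, hx, rfl⟩
  refine ge_of_forall_gt_iff_ge.1 fun z hz => ?_
  obtain ⟨c, hc, hzc⟩ := exists_real_lt_of_lt_sum _ _ hz
  have hcu : ∀ j ∈ Finset.univ, LF (L j) (c j) < u := fun j hj => lf_lt_of_lt_geInv (hc j hj)
  obtain ⟨v, hv, hvu⟩ :=
    EReal.lt_iff_exists_real_btwn.1 ((Finset.sup_lt_iff (bot_lt_coe u)).2 hcu)
  obtain ⟨y, rfl, hy⟩ := exists_sum_eq_of_lt_lf_hconv hbot (hvu.trans_le hx)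
  have hcy : ∀ j, c j ≤ y j := fun j => ((lf_mono (L j)).reflect_lt
    (((Finset.le_sup (Finset.mem_univ j)).trans_lt hv).trans (hy j))).le
  exact EReal.coe_le_coe_iff.2 (hzc.le.trans (Finset.sum_le_sum fun j _ => hcy j))

/-- Theorem 1. For functions `L_1,…,L_n : (0,∞) → (-∞,∞]`, each finite
somewhere, the generalized inverse of the Legendre–Fenchel transform of the Hölder
convolution is the sum of the generalized inverses. -/
theorem geInv_hconv_eq_sum (n : ℕ) (hn : 0 < n) (L : Fin n → ℝ → EReal)
    (hbot : ∀ j, ∀ t : ℝ, 0 < t → L j t ≠ ⊥)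
    (hfin : ∀ j, ∃ t : ℝ, 0 < t ∧ L j t ≠ ⊤) :
    ∀ u : ℝ, geInv (hconv n L) u = ∑ j, geInv (L j) u := fun u =>
  le_antisymm (geInv_hconv_le_sum hn L hfin u) (sum_geInv_le_geInv_hconv hbot u)
end

section
/- Let L : (0,∞) → [−∞,∞] be a function with L(t) < ∞ for some t > 0. Then for every u ∈ ℝ, the largest generalized inverse of the Legendre–Fenchel transform of L satisfies L^{*⇐}(u) = inf_{t>0} (u + L(t))/t, where the infimum is taken in [−∞,∞]. -/
open Set MeasureTheory Filter

/-!
For `t > 0` the inequality `u < t x - L(t)` is equivalent to `(u + L(t)) / t < x`, also when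
`L(t) = ±∞`. Hence `L^*(x) > u` exactly when `x` exceeds the infimum `I` on the right-hand side,
and the infimum of the reals above `I` is `I` itself.
-/

namespace EReal

lemma coe_lt_coe_mul_sub_iff_add_div_lt {t : ℝ} (ht : 0 < t) (x u : ℝ) (l : EReal) :
    (u : EReal) < ((t * x : ℝ) : EReal) - l ↔ ((u : EReal) + l) / (t : EReal) < (x : EReal) := by
  have ht' : (0 : EReal) < t := by exact_mod_cast ht
  induction l using EReal.rec with
  | bot =>
    rw [coe_sub_bot, add_bot, bot_div_of_pos_ne_top ht' (coe_ne_top t)]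
    simp
  | top => simp [top_div_of_pos_ne_top ht' (coe_ne_top t)]
  | coe l =>
    rw [← coe_sub, ← coe_add, ← coe_div, EReal.coe_lt_coe_iff, EReal.coe_lt_coe_iff,
      div_lt_iff₀ ht]
    constructor <;> intro h <;> linarith

lemma sInf_coe_image_setOf_lt (a : EReal) :
    sInf ((fun x : ℝ => (x : EReal)) '' {x : ℝ | a < (x : EReal)}) = a := by
  refine le_antisymm (le_of_forall_gt fun b hab => ?_) (le_sInf ?_)
  · obtain ⟨y, hay, hyb⟩ := exists_between_coe_real hab
    exact (sInf_le (mem_image_of_mem (fun x : ℝ => (x : EReal)) hay)).trans_lt hyb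
  · rintro _ ⟨x, hx, rfl⟩
    exact hx.le

end EReal

lemma coe_lt_LF_iff (L : ℝ → EReal) (u x : ℝ) :
    (u : EReal) < LF L x ↔ ⨅ (t : ℝ) (_ : 0 < t), ((u : EReal) + L t) / (t : EReal) < x := by
  simp only [LF, lt_iSup_iff, iInf_lt_iff]
  exact exists_congr fun t => exists_congr fun ht =>
    EReal.coe_lt_coe_mul_sub_iff_add_div_lt ht x u (L t)

theorem tgeInv_eq_iInf_general (L : ℝ → EReal) (u : ℝ) :
    tgeInv L u = ⨅ (t : ℝ) (_ : 0 < t), ((u : EReal) + L t) / (t : EReal) := by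
  simp only [tgeInv, coe_lt_LF_iff, EReal.sInf_coe_image_setOf_lt]

/-- explicit formula for the largest generalized inverse.
`L^{*⇐}(u) = inf_{t>0} (u + L(t))/t`. -/
theorem tgeInv_eq_iInf (L : ℝ → EReal)
    (hfin : ∃ t : ℝ, 0 < t ∧ L t ≠ ⊤) (u : ℝ) :
    tgeInv L u = ⨅ (t : ℝ) (_ : 0 < t), ((u : EReal) + L t) / (t : EReal) :=
  tgeInv_eq_iInf_general L u
end

section
/- For all real r ≥ 1 and a, b ≥ 0, the power functions p_{r,a}(t) := (a·t)^r on (0,∞) satisfy the additivity property p_{r,a} ⊞ p_{r,b} = p_{r,a+b}, i.e., for every t > 0, inf{ α·(a·t/α)^r + (1−α)·(b·t/(1−α))^r : 0 < α < 1 } = ((a+b)·t)^r. -/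
open Filter Set Topology

/-! `(p_{r,a} ⊞ p_{r,b})(t)` is the infimum over `0 < α < 1` of `holderSum (· ^ r) (a t) (b t) α`,
and the argument works for every `f` convex on `[0, ∞)` in place of `(· ^ r)`. Convexity of `f` at the weights `α, 1 - α` gives `f (x + y)` as a
lower bound. It is attained at `α = x / (x + y)` when `x, y > 0`, and when `x = 0 < y` it is the
limit as `α → 0⁺`, by continuity of `f` at the interior point `y`. -/

noncomputable def holderSum (f : ℝ → ℝ) (x y α : ℝ) : ℝ :=
  α * f (x / α) + (1 - α) * f (y / (1 - α))

variable {f : ℝ → ℝ} {x y α : ℝ}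

theorem holderSum_one_sub (f : ℝ → ℝ) (x y α : ℝ) :
    holderSum f x y (1 - α) = holderSum f y x α := by
  simp only [holderSum, sub_sub_cancel]
  ring

theorem image_holderSum_comm (f : ℝ → ℝ) (x y : ℝ) :
    holderSum f x y '' Ioo 0 1 = holderSum f y x '' Ioo 0 1 := by
  ext
  constructor <;> rintro ⟨α, ⟨h0, h1⟩, rfl⟩ <;>
    exact ⟨1 - α, ⟨by linarith, by linarith⟩, holderSum_one_sub ..⟩

theorem holderSum_div_add (f : ℝ → ℝ) (hx : 0 < x) (hy : 0 < y) :
    holderSum f x y (x / (x + y)) = f (x + y) := by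
  have hxy : 0 < x + y := by linarith
  have h1 : 1 - x / (x + y) = y / (x + y) := by field_simp; ring
  simp only [holderSum, h1]
  field_simp

theorem ConvexOn.le_holderSum (hf : ConvexOn ℝ (Ici 0) f) (hx : 0 ≤ x) (hy : 0 ≤ y)
    (hα : α ∈ Ioo 0 1) : f (x + y) ≤ holderSum f x y α := by
  obtain ⟨h0, h1⟩ := hα
  have h1' : 0 < 1 - α := sub_pos.2 h1
  have h := hf.2 (x := x / α) (y := y / (1 - α)) (mem_Ici.2 (by positivity))
    (mem_Ici.2 (by positivity)) h0.le h1'.le (by ring)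
  have hsum : α * (x / α) + (1 - α) * (y / (1 - α)) = x + y := by field_simp
  simpa [holderSum, hsum] using h

theorem tendsto_holderSum_zero_left (hf : ContinuousAt f y) :
    Tendsto (holderSum f 0 y) (𝓝 0) (𝓝 (f y)) := by
  have hg : ContinuousAt (fun α : ℝ => y / (1 - α)) 0 := by fun_prop (disch := norm_num)
  have hfg : ContinuousAt (fun α : ℝ => f (y / (1 - α))) 0 :=
    ContinuousAt.comp (f := fun α : ℝ => y / (1 - α)) (by simpa using hf) hg
  have : ContinuousAt (holderSum f 0 y) 0 := by
    unfold holderSum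
    simp only [zero_div]
    exact (continuousAt_id.mul continuousAt_const).add
      ((continuousAt_const.sub continuousAt_id).mul hfg)
  simpa [holderSum] using this.tendsto

theorem ConvexOn.isGLB_holderSum (hf : ConvexOn ℝ (Ici 0) f) (hx : 0 ≤ x) (hy : 0 ≤ y) :
    IsGLB (holderSum f x y '' Ioo 0 1) (f (x + y)) := by
  wlog hxy : x ≤ y generalizing x y
  · rw [image_holderSum_comm, add_comm]
    exact this hy hx (le_of_not_ge hxy)
  refine isGLB_of_mem_closure (forall_mem_image.2 fun α hα => hf.le_holderSum hx hy hα) ?_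
  rcases hx.eq_or_lt with rfl | hx
  · rcases hy.eq_or_lt with rfl | hy
    · refine subset_closure ⟨1 / 2, by norm_num, ?_⟩
      simp only [holderSum, zero_div, add_zero]
      ring
    · have hfy : ContinuousAt f y :=
        hf.continuousOn_interior.continuousAt (by simpa [interior_Ici] using Ioi_mem_nhds hy)
      rw [zero_add]
      refine mem_closure_of_tendsto ((tendsto_holderSum_zero_left hfy).mono_left
        (nhdsWithin_le_nhds (s := Ioi 0))) ?_
      filter_upwards [Ioo_mem_nhdsGT zero_lt_one] with α hα using mem_image_of_mem _ hα
  · have hxy' : 0 < x + y := by linarith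
    exact subset_closure ⟨x / (x + y), ⟨by positivity, (div_lt_one hxy').2 (by linarith)⟩,
      holderSum_div_add f hx (hx.trans_le hxy)⟩

/-- additivity of the Hölder convolution on power functions.
For real `r ≥ 1`, `a, b ≥ 0` and `t > 0`,
`inf { α (a t/α)^r + (1-α) (b t/(1-α))^r : 0 < α < 1 } = ((a+b) t)^r`, i.e.
`p_{r,a} ⊞ p_{r,b} = p_{r,a+b}`. -/
theorem hconv_rpow (r a b : ℝ) (hr : 1 ≤ r) (ha : 0 ≤ a) (hb : 0 ≤ b) (t : ℝ) (ht : 0 < t) :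
    sInf {y : ℝ | ∃ α : ℝ, 0 < α ∧ α < 1 ∧
        y = α * (a * t / α) ^ r + (1 - α) * (b * t / (1 - α)) ^ r} =
      ((a + b) * t) ^ r := by
  have hS : {y : ℝ | ∃ α : ℝ, 0 < α ∧ α < 1 ∧
      y = α * (a * t / α) ^ r + (1 - α) * (b * t / (1 - α)) ^ r} =
      holderSum (· ^ r) (a * t) (b * t) '' Ioo 0 1 := by
    ext
    simp only [holderSum, mem_ofPred_eq, mem_image, mem_Ioo, and_assoc, eq_comm]
  rw [hS, add_mul]
  exact ((convexOn_rpow hr).isGLB_holderSum (by positivity) (by positivity)).csInf_eq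
    ((nonempty_Ioo.2 zero_lt_one).image _)
end

section
/- Let L : (0,∞) → [−∞,∞] be convex on (0,∞), real-valued and strictly convex on an interval (t_0, t_1) with 0 < t_0 < t_1 < ∞. Let L'(t) denote the right derivative of L at t ∈ (t_0,t_1), L'(t_0+) := lim_{t ↓ t_0} L'(t), and L'(t_1−) := lim_{t ↑ t_1} L'(t−). Then the interval (L'(t_0+), L'(t_1−)) is nonempty, it is contained in dom(L^*) := {x ∈ ℝ : L^*(x) < ∞}, and the Legendre–Fenchel transform L^* is strictly increasing on the entire interval (L'(t_0+), ∞) ∩ dom(L^*). -/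
open Set MeasureTheory Filter

/-!
On `(t0, t1)` the right derivative `D` of the strictly convex `ℓ` is strictly increasing, which
puts `D s` strictly between `d0` and `d1`. For `s ∈ (t0, t1)` the tangent line
`t ↦ ℓ s + D s * (t - s)` lies below `L` near `s`, hence, by convexity of `L` on `(0, ∞)`, below
`L` on all of `(0, ∞)`. Such a supporting line bounds `L^*(x)` by `s * D s - ℓ s` when
`x ≤ D s`. When `D s ≤ x < y` it gives `L^*(x) + s * (y - x) ≤ L^*(y)`: the terms
`t * x - L t` of `L^*(x)` with `t ≤ s` are controlled by the line, those with `t ≥ s` by the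
terms `t * y - L t` of `L^*(y)`.
-/

open Topology

namespace EReal

lemma coe_le_of_coe_add_mul_le {a b c : ℝ} {X : EReal} (hb : 0 < b)
    (h : ((a + b * c : ℝ) : EReal) ≤ a + b * X) : (c : EReal) ≤ X := by
  induction X using EReal.rec with
  | bot =>
    rw [EReal.coe_mul_bot_of_pos hb, EReal.add_bot] at h
    exact absurd (le_bot_iff.mp h) (EReal.coe_ne_bot _)
  | coe r =>
    norm_cast at h ⊢
    nlinarith
  | top => exact le_top

lemma coe_sub_le_coe_of_ne_bot {a B : ℝ} {X : EReal} (hX : X ≠ ⊥)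
    (h : ∀ r : ℝ, X = r → a - r ≤ B) : (a : EReal) - X ≤ B := by
  induction X using EReal.rec with
  | bot => exact absurd rfl hX
  | coe r => exact_mod_cast h r rfl
  | top => simp

end EReal

lemma strictConvexOn_of_coe_eq {L : ℝ → EReal} {ℓ : ℝ → ℝ} {S : Set ℝ} (hS : Convex ℝ S)
    (hL : ∀ t ∈ S, L t = ℓ t)
    (hstrict : ∀ x ∈ S, ∀ y ∈ S, x ≠ y → ∀ a b : ℝ, 0 < a → 0 < b →
      a + b = 1 → L (a * x + b * y) < (a : EReal) * L x + (b : EReal) * L y) :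
    StrictConvexOn ℝ S ℓ := by
  refine ⟨hS, fun x hx y hy hxy a b ha hb hab => ?_⟩
  have h := hstrict x hx y hy hxy a b ha hb hab
  simp only [smul_eq_mul]
  rw [hL (a * x + b * y) (hS hx hy ha.le hb.le hab), hL x hx, hL y hy] at h
  exact_mod_cast h

lemma ConvexOn.slope_le_of_hasDerivWithinAt_Ioi {S : Set ℝ} {f : ℝ → ℝ} {x y f' : ℝ}
    (hfc : ConvexOn ℝ S f) (hx : x ∈ S) (hy : y ∈ interior S) (hxy : x < y)
    (hf' : HasDerivWithinAt f f' (Ioi y) y) :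
    slope f x y ≤ f' := by
  rw [← hf'.derivWithin (uniqueDiffWithinAt_Ioi y)]
  exact (hfc.slope_le_leftDeriv_of_mem_interior hx hy hxy).trans
    (hfc.leftDeriv_le_rightDeriv_of_mem_interior hy)

lemma StrictConvexOn.strictMonoOn_of_hasDerivWithinAt_Ioi {S : Set ℝ} {f f' : ℝ → ℝ}
    (hfc : StrictConvexOn ℝ S f)
    (hf' : ∀ x ∈ interior S, HasDerivWithinAt f (f' x) (Ioi x) x) :
    StrictMonoOn f' (interior S) := fun x hx y hy hxy =>
  (hfc.lt_slope_of_hasDerivWithinAt_Ioi (interior_subset hx) (interior_subset hy) hxy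
    (hf' x hx)).trans_le
    (hfc.convexOn.slope_le_of_hasDerivWithinAt_Ioi (interior_subset hx) hy hxy (hf' y hy))

lemma ConvexOn.add_mul_sub_le_of_hasDerivWithinAt_Ioi {S : Set ℝ} {f : ℝ → ℝ} {x y f' : ℝ}
    (hfc : ConvexOn ℝ S f) (hx : x ∈ interior S) (hy : y ∈ S)
    (hf' : HasDerivWithinAt f f' (Ioi x) x) :
    f x + f' * (y - x) ≤ f y := by
  rcases lt_trichotomy x y with hxy | rfl | hyx
  · have h := hfc.le_slope_of_hasDerivWithinAt_Ioi (interior_subset hx) hy hxy hf'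
    rw [slope_def_field, le_div_iff₀ (sub_pos.mpr hxy)] at h
    linarith
  · simp
  · have h := hfc.slope_le_of_hasDerivWithinAt_Ioi hy hx hyx hf'
    rw [slope_def_field, div_le_iff₀ (sub_pos.mpr hyx)] at h
    linarith

lemma line_le_of_eventually_line_le {L : ℝ → EReal} {C : Set ℝ}
    (hL : ∀ x ∈ C, ∀ y ∈ C, ∀ a b : ℝ, 0 ≤ a → 0 ≤ b →
      a + b = 1 → L (a * x + b * y) ≤ (a : EReal) * L x + (b : EReal) * L y)
    {s c m t : ℝ} (hs : s ∈ C) (hLs : L s = c)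
    (hloc : ∀ᶠ u in 𝓝 s, ((c + m * (u - s) : ℝ) : EReal) ≤ L u) (ht : t ∈ C) :
    ((c + m * (t - s) : ℝ) : EReal) ≤ L t := by
  have hu : Tendsto (fun ε : ℝ => s + ε * (t - s)) (𝓝[>] 0) (𝓝 s) := by
    have : Continuous (fun ε : ℝ => s + ε * (t - s)) := by fun_prop
    simpa using (this.tendsto 0).mono_left nhdsWithin_le_nhds
  obtain ⟨ε, hε_loc, hε0, hε1⟩ :=
    ((hu.eventually hloc).and (Ioo_mem_nhdsGT zero_lt_one)).exists
  have hconv := hL s hs t ht (1 - ε) ε (by linarith) hε0.le (by ring)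
  rw [show (1 - ε) * s + ε * t = s + ε * (t - s) by ring, hLs] at hconv
  refine EReal.coe_le_of_coe_add_mul_le (a := (1 - ε) * c) hε0 ?_
  calc (((1 - ε) * c + ε * (c + m * (t - s)) : ℝ) : EReal)
      = ((c + m * (s + ε * (t - s) - s) : ℝ) : EReal) := by congr 1; ring
    _ ≤ _ := hε_loc.trans hconv
    _ = _ := by rw [← EReal.coe_mul]

section Boundary

variable {β : Type*} [LinearOrder β] [TopologicalSpace β] [OrderClosedTopology β]
  {f : ℝ → β} {a b : ℝ} {d : β}

lemma StrictMonoOn.lt_of_tendsto_nhdsGT (hf : StrictMonoOn f (Ioo a b))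
    (hd : Tendsto f (𝓝[>] a) (𝓝 d)) {s : ℝ} (hs : s ∈ Ioo a b) : d < f s := by
  obtain ⟨u, hau, hus⟩ := exists_between hs.1
  have hu : u ∈ Ioo a b := ⟨hau, hus.trans hs.2⟩
  refine lt_of_le_of_lt (le_of_tendsto hd ?_) (hf hu hs hus)
  filter_upwards [Ioo_mem_nhdsGT hau] with t ht
  exact (hf ⟨ht.1, ht.2.trans hu.2⟩ hu ht.2).le

lemma StrictMonoOn.lt_of_tendsto_nhdsLT (hf : StrictMonoOn f (Ioo a b))
    (hd : Tendsto f (𝓝[<] b) (𝓝 d)) {s : ℝ} (hs : s ∈ Ioo a b) : f s < d := by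
  obtain ⟨u, hsu, hub⟩ := exists_between hs.2
  have hu : u ∈ Ioo a b := ⟨hs.1.trans hsu, hub⟩
  refine lt_of_lt_of_le (hf hs hu hsu) (ge_of_tendsto hd ?_)
  filter_upwards [Ioo_mem_nhdsLT hub] with t ht
  exact (hf hu ⟨hu.1.trans ht.1, ht.2⟩ ht.1).le

lemma exists_mem_Ioo_lt_of_tendsto_nhdsGT (hab : a < b) (hd : Tendsto f (𝓝[>] a) (𝓝 d))
    {x : β} (hx : d < x) : ∃ s ∈ Ioo a b, f s < x :=
  ((hd.eventually (eventually_lt_nhds hx)).and (Ioo_mem_nhdsGT hab)).exists.imp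
    fun _ h => ⟨h.2, h.1⟩

lemma exists_mem_Ioo_gt_of_tendsto_nhdsLT (hab : a < b) (hd : Tendsto f (𝓝[<] b) (𝓝 d))
    {x : β} (hx : x < d) : ∃ s ∈ Ioo a b, x < f s :=
  ((hd.eventually (eventually_gt_nhds hx)).and (Ioo_mem_nhdsLT hab)).exists.imp
    fun _ h => ⟨h.2, h.1⟩

end Boundary

lemma le_LF (L : ℝ → EReal) {t : ℝ} (ht : 0 < t) (x : ℝ) :
    ((t * x : ℝ) : EReal) - L t ≤ LF L x :=
  le_iSup₂ (f := fun (t : ℝ) (_ : 0 < t) => ((t * x : ℝ) : EReal) - L t) t ht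

section SupportingLine

variable {L : ℝ → EReal} {s c m : ℝ}

lemma LF_le_of_le_slope (hsupp : ∀ t, 0 < t → ((c + m * (t - s) : ℝ) : EReal) ≤ L t)
    {x : ℝ} (hxm : x ≤ m) : LF L x ≤ ((m * s - c : ℝ) : EReal) := by
  refine iSup₂_le fun t ht => ?_
  refine EReal.coe_sub_le_coe_of_ne_bot (ne_bot_of_le_ne_bot (EReal.coe_ne_bot _) (hsupp t ht))
    fun r hr => ?_
  have h := hsupp t ht
  rw [hr, EReal.coe_le_coe_iff] at h
  linarith [mul_le_mul_of_nonneg_left hxm ht.le]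

lemma LF_lt_LF_of_slope_le (hs : 0 < s) (hLs : L s = c)
    (hsupp : ∀ t, 0 < t → ((c + m * (t - s) : ℝ) : EReal) ≤ L t)
    {x y : ℝ} (hmx : m ≤ x) (hxy : x < y) (hy : LF L y < ⊤) : LF L x < LF L y := by
  have hlow : ((s * y - c : ℝ) : EReal) ≤ LF L y := by
    simpa only [hLs, EReal.coe_sub] using le_LF L hs y
  obtain ⟨M, hM⟩ : ∃ M : ℝ, LF L y = M :=
    ⟨_, (EReal.coe_toReal hy.ne (ne_bot_of_le_ne_bot (EReal.coe_ne_bot _) hlow)).symm⟩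
  rw [hM, EReal.coe_le_coe_iff] at hlow
  have hx : LF L x ≤ ((M - s * (y - x) : ℝ) : EReal) := by
    refine iSup₂_le fun t ht => ?_
    refine EReal.coe_sub_le_coe_of_ne_bot
      (ne_bot_of_le_ne_bot (EReal.coe_ne_bot _) (hsupp t ht)) fun r hr => ?_
    have hline := hsupp t ht
    have hty := le_LF L ht y
    rw [hr, EReal.coe_le_coe_iff] at hline
    rw [hr, hM, ← EReal.coe_sub, EReal.coe_le_coe_iff] at hty
    rcases le_total t s with hts | hst
    · linarith [mul_le_mul_of_nonneg_right hts (sub_nonneg.mpr hmx)]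
    · linarith [mul_le_mul_of_nonneg_right hst (sub_nonneg.mpr hxy.le)]
  rw [hM]
  exact hx.trans_lt (EReal.coe_lt_coe_iff.mpr (by nlinarith [mul_pos hs (sub_pos.mpr hxy)]))

end SupportingLine

/-- Proposition str. Let `L` be convex on `(0,∞)` and real-valued
(given by `ℓ`) and strictly convex on `(t_0,t_1)` with `0 < t_0 < t_1 < ∞`. Let `D t` be
the right derivative of `ℓ` at `t ∈ (t_0,t_1)`, and let `d_0 = L'(t_0+)`,
`d_1 = L'(t_1-)` be its one-sided limits (in `[-∞,∞]`). Then the interval `(d_0, d_1)` is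
nonempty, it is contained in `dom L^*`, and `L^*` is strictly increasing on the entire
set `(d_0, ∞) ∩ dom L^*`. -/
theorem LF_strictMono_of_strictConvex (L : ℝ → EReal) (ℓ : ℝ → ℝ) (t0 t1 : ℝ)
    (ht0 : 0 < t0) (ht01 : t0 < t1)
    (hconvex : ∀ x ∈ Ioi (0 : ℝ), ∀ y ∈ Ioi (0 : ℝ), ∀ a b : ℝ, 0 ≤ a → 0 ≤ b →
      a + b = 1 → L (a * x + b * y) ≤ (a : EReal) * L x + (b : EReal) * L y)
    (hreal : ∀ t ∈ Ioo t0 t1, L t = ((ℓ t : ℝ) : EReal))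
    (hstrict : ∀ x ∈ Ioo t0 t1, ∀ y ∈ Ioo t0 t1, x ≠ y → ∀ a b : ℝ, 0 < a → 0 < b →
      a + b = 1 → L (a * x + b * y) < (a : EReal) * L x + (b : EReal) * L y)
    (D : ℝ → ℝ) (hD : ∀ t ∈ Ioo t0 t1, HasDerivWithinAt ℓ (D t) (Ioi t) t)
    (d0 d1 : EReal)
    (hd0 : Tendsto (fun t => (D t : EReal)) (nhdsWithin t0 (Ioi t0)) (nhds d0))
    (hd1 : Tendsto (fun t => (D t : EReal)) (nhdsWithin t1 (Iio t1)) (nhds d1)) :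
    (∃ x : ℝ, d0 < (x : EReal) ∧ (x : EReal) < d1) ∧
      (∀ x : ℝ, d0 < (x : EReal) → (x : EReal) < d1 → LF L x < ⊤) ∧
      (∀ x y : ℝ, d0 < (x : EReal) → x < y → LF L x < ⊤ → LF L y < ⊤ →
        LF L x < LF L y) := by
  have hℓ : StrictConvexOn ℝ (Ioo t0 t1) ℓ :=
    strictConvexOn_of_coe_eq (convex_Ioo t0 t1) hreal hstrict
  have hD' : ∀ t ∈ interior (Ioo t0 t1), HasDerivWithinAt ℓ (D t) (Ioi t) t := by
    rwa [interior_Ioo]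
  have hDmono : StrictMonoOn (fun t => (D t : EReal)) (Ioo t0 t1) := by
    have h := hℓ.strictMonoOn_of_hasDerivWithinAt_Ioi hD'
    rw [interior_Ioo] at h
    exact EReal.coe_strictMono.comp_strictMonoOn h
  have hsupp : ∀ s ∈ Ioo t0 t1, ∀ t, 0 < t → ((ℓ s + D s * (t - s) : ℝ) : EReal) ≤ L t := by
    intro s hs t ht
    refine line_le_of_eventually_line_le hconvex (ht0.trans hs.1) (hreal s hs) ?_ ht
    filter_upwards [isOpen_Ioo.mem_nhds hs] with u hu
    rw [hreal u hu, EReal.coe_le_coe_iff]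
    exact hℓ.convexOn.add_mul_sub_le_of_hasDerivWithinAt_Ioi (by rwa [interior_Ioo]) hu
      (hD s hs)
  refine ⟨?_, ?_, ?_⟩
  · obtain ⟨s, hs⟩ := nonempty_Ioo.mpr ht01
    exact ⟨D s, hDmono.lt_of_tendsto_nhdsGT hd0 hs, hDmono.lt_of_tendsto_nhdsLT hd1 hs⟩
  · intro x _ hx
    obtain ⟨s, hs, hxs⟩ := exists_mem_Ioo_gt_of_tendsto_nhdsLT ht01 hd1 hx
    exact (LF_le_of_le_slope (hsupp s hs) (EReal.coe_le_coe_iff.mp hxs.le)).trans_lt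
      (EReal.coe_lt_top _)
  · intro x y hx hxy _ hy
    obtain ⟨s, hs, hsx⟩ := exists_mem_Ioo_lt_of_tendsto_nhdsGT ht01 hd0 hx
    exact LF_lt_LF_of_slope_le (ht0.trans hs.1) (hreal s hs) (hsupp s hs)
      (EReal.coe_le_coe_iff.mp hsx.le) hxy hy
end

section
/- Let X_1,…,X_n be real-valued random variables on a common probability space (not assumed independent) such that for each j there exists t > 0 with E e^{tX_j} < ∞. Then for every t > 0, the Cramér–Chernoff function of the sum satisfies L_{X_1+⋯+X_n}(t) ≤ (L_{X_1} ⊞ ⋯ ⊞ L_{X_n})(t). -/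
open Set MeasureTheory Filter

/-!
Write `e^{t(X_1+⋯+X_n)} = ∏_j (e^{(t/α_j) X_j})^{α_j}` and apply the generalized Hölder
inequality with exponents `1/α_j`; taking logarithms turns the product of the `α_j`-th powers
into `Σ_j α_j L_{X_j}(t/α_j)`, and the infimum over the weights `α` gives the Hölder convolution.
-/

theorem ENNReal.log_prod {ι : Type*} (s : Finset ι) (f : ι → ENNReal) :
    ENNReal.log (∏ j ∈ s, f j) = ∑ j ∈ s, ENNReal.log (f j) := by
  induction s using Finset.cons_induction with
  | empty => simp
  | cons a s _ ih => rw [Finset.prod_cons, Finset.sum_cons, ENNReal.log_mul_add, ih]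

section Holder

variable {Ω ι : Type*} [MeasurableSpace Ω] [Fintype ι] (μ : Measure Ω) {X : ι → Ω → ℝ}
  {α : ι → ℝ}

theorem lintegral_exp_mul_sum_le_prod_rpow (hX : ∀ j, AEMeasurable (X j) μ)
    (hα : ∀ j, 0 < α j) (hsum : ∑ j, α j = 1) (t : ℝ) :
    ∫⁻ ω, ENNReal.ofReal (Real.exp (t * ∑ j, X j ω)) ∂μ ≤
      ∏ j, (∫⁻ ω, ENNReal.ofReal (Real.exp (t / α j * X j ω)) ∂μ) ^ α j := by
  have hsplit : ∀ ω, ENNReal.ofReal (Real.exp (t * ∑ j, X j ω)) =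
      ∏ j, ENNReal.ofReal (Real.exp (t / α j * X j ω)) ^ α j := fun ω => by
    have hpow : ∀ j, ENNReal.ofReal (Real.exp (t / α j * X j ω)) ^ α j =
        ENNReal.ofReal (Real.exp (t * X j ω)) := fun j => by
      rw [ENNReal.ofReal_rpow_of_pos (Real.exp_pos _), ← Real.exp_mul]
      field_simp [(hα j).ne']
    simp only [hpow, Finset.mul_sum, Real.exp_sum]
    exact ENNReal.ofReal_prod_of_nonneg fun j _ => (Real.exp_pos _).le
  simp only [hsplit]
  exact ENNReal.lintegral_prod_norm_pow_le Finset.univ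
    (fun j _ => ((hX j).const_mul _).exp.ennreal_ofReal) hsum fun j _ => (hα j).le

theorem cramer_sum_le_sum_mul_cramer (hX : ∀ j, AEMeasurable (X j) μ)
    (hα : ∀ j, 0 < α j) (hsum : ∑ j, α j = 1) (t : ℝ) :
    cramer μ (fun ω => ∑ j, X j ω) t ≤ ∑ j, (α j : EReal) * cramer μ (X j) (t / α j) := by
  calc cramer μ (fun ω => ∑ j, X j ω) t
      ≤ ENNReal.log (∏ j, (∫⁻ ω, ENNReal.ofReal (Real.exp (t / α j * X j ω)) ∂μ) ^ α j) :=
        ENNReal.log_monotone (lintegral_exp_mul_sum_le_prod_rpow μ hX hα hsum t)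
    _ = ∑ j, (α j : EReal) * cramer μ (X j) (t / α j) := by
        simp only [ENNReal.log_prod, ENNReal.log_rpow, cramer]

end Holder

theorem cramer_sum_le_hconv_general (Ω : Type*) [MeasurableSpace Ω] (μ : Measure Ω)
    (n : ℕ) (X : Fin n → Ω → ℝ)
    (hX : ∀ j, Measurable (X j)) :
    ∀ t : ℝ, 0 < t →
      cramer μ (fun ω => ∑ j, X j ω) t ≤ hconv n (fun j => cramer μ (X j)) t :=
  fun t _ => le_iInf₂ fun _ ⟨hα, hsum⟩ =>
    cramer_sum_le_sum_mul_cramer μ (fun j => (hX j).aemeasurable) hα hsum t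

/-- Hölder's inequality for Cramér–Chernoff functions. For random
variables `X_1,…,X_n` (not assumed independent), `L_{X_1+⋯+X_n} ≤ L_{X_1} ⊞ ⋯ ⊞ L_{X_n}`
on `(0,∞)`. -/
theorem cramer_sum_le_hconv (Ω : Type*) [MeasurableSpace Ω] (μ : Measure Ω)
    [IsProbabilityMeasure μ] (n : ℕ) (hn : 0 < n) (X : Fin n → Ω → ℝ)
    (hX : ∀ j, Measurable (X j))
    (hfin : ∀ j, ∃ t : ℝ, 0 < t ∧ ∫⁻ ω, ENNReal.ofReal (Real.exp (t * X j ω)) ∂μ ≠ ⊤) :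
    ∀ t : ℝ, 0 < t →
      cramer μ (fun ω => ∑ j, X j ω) t ≤ hconv n (fun j => cramer μ (X j)) t :=
  cramer_sum_le_hconv_general Ω μ n X hX
end

section
/- Let X be a real-valued random variable with E e^{tX} < ∞ for some t > 0, and let L := L_X. Then sup{x ∈ ℝ : L^*(x) < ∞} = sup supp(X), where both sides take values in (−∞,∞] and sup ∅ := −∞ on the left-hand side (the right-hand side is > −∞ since X is real-valued). -/
open Set MeasureTheory Filter

/-!
If `X ≤ m` almost surely, then `L_X(t) ≤ t m`, so `L^*(x) = ∞` for every `x > m`. Conversely, if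
`P(X > c) > 0`, Markov's inequality gives `L_X(t) ≥ t c + ln P(X > c)` for all `t > 0`, so
`L^*(c) ≤ -ln P(X > c) < ∞`. Hence the domain of `L^*` contains every real below `ess sup X` and
nothing above it.
-/

section LegendreFenchel

variable {L : ℝ → EReal} {x : ℝ}

lemma sub_le_LF {t : ℝ} (ht : 0 < t) : ((t * x : ℝ) : EReal) - L t ≤ LF L x :=
  le_iSup₂ (f := fun t (_ : 0 < t) => ((t * x : ℝ) : EReal) - L t) t ht

lemma LF_eq_top_of_le_affine {m C : ℝ} (hL : ∀ t, 0 < t → L t ≤ ((t * m + C : ℝ) : EReal))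
    (hx : m < x) : LF L x = ⊤ := by
  refine EReal.eq_top_iff_forall_lt _ |>.2 fun r => ?_
  set t := (max (r + C) 0 + 1) / (x - m)
  have ht : 0 < t := div_pos (by positivity) (sub_pos.2 hx)
  have hgain : t * x - (t * m + C) = max (r + C) 0 + 1 - C := by
    rw [← sub_sub, ← mul_sub, div_mul_cancel₀ _ (sub_pos.2 hx).ne']
  calc (r : EReal) < ((t * x - (t * m + C) : ℝ) : EReal) := by
        rw [EReal.coe_lt_coe_iff, hgain]
        linarith [le_max_left (r + C) 0]
    _ ≤ ((t * x : ℝ) : EReal) - L t := by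
        rw [EReal.coe_sub]
        exact EReal.sub_le_sub le_rfl (hL t ht)
    _ ≤ LF L x := sub_le_LF ht

lemma LF_le_of_affine_le {r : ℝ} (hL : ∀ t, 0 < t → ((t * x + r : ℝ) : EReal) ≤ L t) :
    LF L x ≤ ((-r : ℝ) : EReal) :=
  iSup₂_le fun t ht => calc
    ((t * x : ℝ) : EReal) - L t ≤ ((t * x : ℝ) : EReal) - ((t * x + r : ℝ) : EReal) :=
      EReal.sub_le_sub le_rfl (hL t ht)
    _ = ((-r : ℝ) : EReal) := by rw [← EReal.coe_sub]; ring_nf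

end LegendreFenchel

section Cramer

variable {Ω : Type*} [MeasurableSpace Ω] {μ : Measure Ω} {X : Ω → ℝ} {t : ℝ}

lemma cramer_le_of_ae_le {m : ℝ} (hm : ∀ᵐ ω ∂μ, X ω ≤ m) (ht : 0 ≤ t) :
    cramer μ X t ≤ ((t * m : ℝ) : EReal) + ENNReal.log (μ univ) := by
  have hint : ∫⁻ ω, ENNReal.ofReal (Real.exp (t * X ω)) ∂μ
      ≤ ENNReal.ofReal (Real.exp (t * m)) * μ univ := by
    rw [← lintegral_const]
    refine lintegral_mono_ae (hm.mono fun ω hω => ?_)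
    exact ENNReal.ofReal_le_ofReal (Real.exp_le_exp.2 (mul_le_mul_of_nonneg_left hω ht))
  calc cramer μ X t ≤ ENNReal.log (ENNReal.ofReal (Real.exp (t * m)) * μ univ) :=
        ENNReal.log_monotone hint
    _ = ((t * m : ℝ) : EReal) + ENNReal.log (μ univ) := by
        rw [ENNReal.log_mul_add, ENNReal.log_ofReal_of_pos (Real.exp_pos _), Real.log_exp]

lemma mul_add_log_meas_lt_le_cramer (hX : Measurable X) (c : ℝ) (ht : 0 ≤ t) :
    ((t * c : ℝ) : EReal) + ENNReal.log (μ {ω | c < X ω}) ≤ cramer μ X t := by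
  have hmarkov : ENNReal.ofReal (Real.exp (t * c)) * μ {ω | c < X ω}
      ≤ ∫⁻ ω, ENNReal.ofReal (Real.exp (t * X ω)) ∂μ := by
    refine le_trans ?_ (mul_meas_ge_le_lintegral₀ (hX.const_mul t).exp.ennreal_ofReal.aemeasurable
      (ENNReal.ofReal (Real.exp (t * c))))
    refine mul_le_mul_right (measure_mono fun ω (hω : c < X ω) => ?_) _
    exact ENNReal.ofReal_le_ofReal (Real.exp_le_exp.2 (mul_le_mul_of_nonneg_left (le_of_lt hω) ht))
  calc ((t * c : ℝ) : EReal) + ENNReal.log (μ {ω | c < X ω})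
      = ENNReal.log (ENNReal.ofReal (Real.exp (t * c)) * μ {ω | c < X ω}) := by
        rw [ENNReal.log_mul_add, ENNReal.log_ofReal_of_pos (Real.exp_pos _), Real.log_exp]
    _ ≤ cramer μ X t := ENNReal.log_monotone hmarkov

lemma le_essSup_of_LF_cramer_lt_top [IsFiniteMeasure μ] {x : ℝ}
    (hx : LF (cramer μ X) x < ⊤) : (x : EReal) ≤ essSup (fun ω => (X ω : EReal)) μ := by
  by_contra! hlt
  obtain ⟨m, hMm, hmx⟩ := EReal.exists_between_coe_real hlt
  have hm : ∀ᵐ ω ∂μ, X ω ≤ m :=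
    (ae_lt_of_essSup_lt hMm).mono fun ω hω => by exact_mod_cast hω.le
  have hlog : ENNReal.log (μ univ) ≠ ⊤ := (ENNReal.log_lt_top_iff.2 (measure_lt_top μ univ)).ne
  refine hx.ne (LF_eq_top_of_le_affine (C := (ENNReal.log (μ univ)).toReal) (fun t ht => ?_)
    (by exact_mod_cast hmx))
  calc cramer μ X t ≤ ((t * m : ℝ) : EReal) + ENNReal.log (μ univ) := cramer_le_of_ae_le hm ht.le
    _ ≤ _ := by rw [EReal.coe_add]; gcongr; exact EReal.le_coe_toReal hlog

lemma LF_cramer_lt_top_of_lt_essSup [IsFiniteMeasure μ] (hX : Measurable X) {c : ℝ}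
    (hc : (c : EReal) < essSup (fun ω => (X ω : EReal)) μ) : LF (cramer μ X) c < ⊤ := by
  have hpos : μ {ω | c < X ω} ≠ 0 := fun h0 => hc.not_ge <| essSup_le_of_ae_le _ <|
    ae_iff.2 (by simpa only [not_le, EReal.coe_lt_coe_iff] using h0)
  set r := Real.log (μ {ω | c < X ω}).toReal
  have hlog : ENNReal.log (μ {ω | c < X ω}) = r := ENNReal.log_pos_real hpos (measure_ne_top _ _)
  refine (LF_le_of_affine_le (r := r) fun t ht => ?_).trans_lt (EReal.coe_lt_top _)
  simpa only [hlog, EReal.coe_add] using mul_add_log_meas_lt_le_cramer (μ := μ) hX c ht.le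

end Cramer

lemma sSup_coe_image_eq_of_lt_mem_of_mem_le {S : Set ℝ} {M : EReal}
    (hlt : ∀ c : ℝ, (c : EReal) < M → c ∈ S) (hle : ∀ x ∈ S, (x : EReal) ≤ M) :
    sSup ((fun x : ℝ => (x : EReal)) '' S) = M := by
  refine le_antisymm (sSup_le <| forall_mem_image.2 hle) (le_of_forall_lt fun c hc => ?_)
  obtain ⟨z, hcz, hzM⟩ := EReal.exists_between_coe_real hc
  exact hcz.trans_le (le_sSup (mem_image_of_mem _ (hlt z hzM)))

theorem sup_dom_LF_cramer_eq_essSup_general (Ω : Type*) [MeasurableSpace Ω] (μ : Measure Ω)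
    [IsProbabilityMeasure μ] (X : Ω → ℝ) (hX : Measurable X) :
    sSup ((fun x : ℝ => (x : EReal)) '' {x : ℝ | LF (cramer μ X) x < ⊤}) =
      essSup (fun ω => (X ω : EReal)) μ :=
  sSup_coe_image_eq_of_lt_mem_of_mem_le (fun _ => LF_cramer_lt_top_of_lt_essSup hX)
    fun _ => le_essSup_of_LF_cramer_lt_top

/-- Lemma, first part. `x_∞ = sup dom(L_X^*)` equals
`x_max = sup supp X` (the essential supremum of `X`), both in `[-∞,∞]` with
`sup ∅ = -∞` on the left. -/
theorem sup_dom_LF_cramer_eq_essSup (Ω : Type*) [MeasurableSpace Ω] (μ : Measure Ω)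
    [IsProbabilityMeasure μ] (X : Ω → ℝ) (hX : Measurable X)
    (hfin : ∃ t : ℝ, 0 < t ∧ ∫⁻ ω, ENNReal.ofReal (Real.exp (t * X ω)) ∂μ ≠ ⊤) :
    sSup ((fun x : ℝ => (x : EReal)) '' {x : ℝ | LF (cramer μ X) x < ⊤}) =
      essSup (fun ω => (X ω : EReal)) μ :=
  sup_dom_LF_cramer_eq_essSup_general Ω μ X hX
end

section
/- Let X be a real-valued random variable with E e^{tX} < ∞ for some t > 0, and suppose x_max := sup supp(X) < ∞ and p_max := P(X = x_max) > 0, and let L := L_X. Then: L^{*←}(u) = x_max for every u ∈ (−ln p_max, ∞); L^{*←}(−ln p_max) = x_max if p_max < 1; and L^{*←}(−ln p_max) = L^{*←}(0) = −∞ if p_max = 1. -/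
open Set MeasureTheory Filter

/-! Since `t x - L_X(t) = -log E e^{t(X - x)}`, the transform `L_X^*(x)` is `-log m(x)` for the
optimal Chernoff bound `m(x) = inf_{t>0} E e^{t(X - x)}`. If `X ≤ c` a.s. and `p = P(X = c)`, then
`m(x) = 0` for `x > c` (the bound `e^{t(c - x)}` tends to `0`), `m(x) ≥ p` for `x ≤ c`,
`m(c) = p` (dominated convergence as `t → ∞`), `m(x) > p` for `x < c` when `p < 1`, and `m ≤ 1`
(let `t → 0`). So `{x | u ≤ L_X^*(x)}` is `(c, ∞)`, `[c, ∞)` or `ℝ` in the three cases. -/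

open Topology ENNReal

noncomputable def chernoffBound {Ω : Type*} [MeasurableSpace Ω] (μ : Measure Ω) (X : Ω → ℝ)
    (x : ℝ) : ℝ≥0∞ :=
  ⨅ (t : ℝ) (_ : 0 < t), ∫⁻ ω, ENNReal.ofReal (Real.exp (t * (X ω - x))) ∂μ

section

variable {Ω : Type*} [MeasurableSpace Ω] {μ : Measure Ω} {X : Ω → ℝ} {c : ℝ}

lemma lintegral_exp_mul_eq_mul (t x : ℝ) :
    ∫⁻ ω, ENNReal.ofReal (Real.exp (t * X ω)) ∂μ =
      ENNReal.ofReal (Real.exp (t * x)) * ∫⁻ ω, ENNReal.ofReal (Real.exp (t * (X ω - x))) ∂μ := by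
  rw [← lintegral_const_mul' _ _ ofReal_ne_top]
  refine lintegral_congr fun ω => ?_
  rw [← ENNReal.ofReal_mul (Real.exp_pos _).le, ← Real.exp_add]
  ring_nf

lemma coe_mul_sub_cramer (t x : ℝ) :
    ((t * x : ℝ) : EReal) - cramer μ X t =
      -ENNReal.log (∫⁻ ω, ENNReal.ofReal (Real.exp (t * (X ω - x))) ∂μ) := by
  rw [cramer, lintegral_exp_mul_eq_mul t x, ENNReal.log_mul_add,
    ENNReal.log_ofReal_of_pos (Real.exp_pos _), Real.log_exp, EReal.sub_add_cancel_left]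

theorem LF_cramer_eq_neg_log_chernoffBound (x : ℝ) :
    LF (cramer μ X) x = -ENNReal.log (chernoffBound μ X x) := by
  simp only [LF, coe_mul_sub_cramer, chernoffBound]
  exact ((ENNReal.logOrderIso.trans EReal.negOrderIso).map_iInf₂ _).symm

lemma lintegral_exp_mul_sub_eq_add (hX : Measurable X) (t x c : ℝ) :
    ∫⁻ ω, ENNReal.ofReal (Real.exp (t * (X ω - x))) ∂μ =
      μ {ω | X ω = c} * ENNReal.ofReal (Real.exp (t * (c - x))) +
        ∫⁻ ω in {ω | X ω = c}ᶜ, ENNReal.ofReal (Real.exp (t * (X ω - x))) ∂μ := by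
  have hs : MeasurableSet {ω | X ω = c} := hX (measurableSet_singleton c)
  rw [← lintegral_add_compl _ hs, setLIntegral_congr_fun hs fun ω (hω : X ω = c) => by rw [hω],
    setLIntegral_const, mul_comm]

lemma measure_le_chernoffBound (hX : Measurable X) {x : ℝ} (hx : x ≤ c) :
    μ {ω | X ω = c} ≤ chernoffBound μ X x := by
  refine le_iInf₂ fun t ht => ?_
  rw [lintegral_exp_mul_sub_eq_add hX t x c]
  refine le_add_right (le_mul_of_one_le_right' ?_)
  exact ENNReal.one_le_ofReal.2 (Real.one_le_exp (by nlinarith))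

lemma measure_lt_chernoffBound [IsFiniteMeasure μ] (hX : Measurable X) {x : ℝ} (hx : x < c)
    (hp : μ {ω | X ω = c} ≠ 0) (hq : μ {ω | X ω = c}ᶜ ≠ 0) :
    μ {ω | X ω = c} < chernoffBound μ X x := by
  set p := μ {ω | X ω = c}
  set r := ∫⁻ ω in {ω | X ω = c}ᶜ, ENNReal.ofReal (Real.exp (-|X ω - x|)) ∂μ
  have hr : r ≠ 0 := by
    refine ((setLIntegral_pos_iff (by fun_prop)).2 ?_).ne'
    simpa [Function.support, Real.exp_pos] using pos_iff_ne_zero.2 hq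
  have hp_lt : p < p * ENNReal.ofReal (Real.exp (c - x)) := by
    have hexp : 1 < ENNReal.ofReal (Real.exp (c - x)) := by simpa using hx
    simpa using ENNReal.mul_lt_mul_right hp (measure_ne_top _ _) hexp
  refine (lt_min (ENNReal.lt_add_right (measure_ne_top _ _) hr) hp_lt).trans_le
    (le_iInf₂ fun t ht => ?_)
  rw [lintegral_exp_mul_sub_eq_add hX t x c]
  -- for `t ≤ 1` the mass off the atom contributes at least `r`, for `t ≥ 1` the atom alone wins
  rcases le_total t 1 with ht1 | ht1
  · refine (min_le_left _ _).trans (add_le_add ?_ (setLIntegral_mono' ?_ fun ω _ => ?_))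
    · exact le_mul_of_one_le_right' (ENNReal.one_le_ofReal.2 (Real.one_le_exp (by nlinarith)))
    · exact hX (measurableSet_singleton c) |>.compl
    · refine ENNReal.ofReal_le_ofReal (Real.exp_le_exp.2 ?_)
      nlinarith [abs_nonneg (X ω - x), neg_abs_le (X ω - x)]
  · refine (min_le_right _ _).trans (le_add_right (mul_le_mul_right ?_ p))
    exact ENNReal.ofReal_le_ofReal (Real.exp_le_exp.2 (by nlinarith))

lemma chernoffBound_le_measure [IsFiniteMeasure μ] (hX : Measurable X)
    (hle : ∀ᵐ ω ∂μ, X ω ≤ c) : chernoffBound μ X c ≤ μ {ω | X ω = c} := by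
  have hs : MeasurableSet {ω | X ω = c} := hX (measurableSet_singleton c)
  have hlim : Tendsto (fun t : ℝ => ∫⁻ ω, ENNReal.ofReal (Real.exp (t * (X ω - c))) ∂μ) atTop
      (𝓝 (∫⁻ ω, {ω | X ω = c}.indicator 1 ω ∂μ)) := by
    refine tendsto_lintegral_filter_of_dominated_convergence 1
      (.of_forall fun t => by fun_prop) ?_ (by simp) (hle.mono fun ω hω => ?_)
    · filter_upwards [eventually_ge_atTop 0] with t ht
      filter_upwards [hle] with ω hω
      exact ENNReal.ofReal_le_one.2 (Real.exp_le_one_iff.2 (by nlinarith))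
    · rcases hω.eq_or_lt with heq | hlt
      · simp [heq]
      · have hne : ω ∉ {ω | X ω = c} := hlt.ne
        simpa [hne] using ENNReal.tendsto_ofReal (Real.tendsto_exp_atBot.comp
          (tendsto_id.atTop_mul_const_of_neg (sub_neg.2 hlt)))
  rw [lintegral_indicator_one hs] at hlim
  exact ge_of_tendsto hlim ((eventually_gt_atTop 0).mono fun t ht => iInf₂_le t ht)

lemma chernoffBound_le_exp [IsProbabilityMeasure μ] (hle : ∀ᵐ ω ∂μ, X ω ≤ c) {t : ℝ}
    (ht : 0 < t) (x : ℝ) : chernoffBound μ X x ≤ ENNReal.ofReal (Real.exp (t * (c - x))) := by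
  refine (iInf₂_le t ht).trans ?_
  calc ∫⁻ ω, ENNReal.ofReal (Real.exp (t * (X ω - x))) ∂μ
      ≤ ∫⁻ _, ENNReal.ofReal (Real.exp (t * (c - x))) ∂μ :=
        lintegral_mono_ae (hle.mono fun ω hω => by gcongr)
    _ = ENNReal.ofReal (Real.exp (t * (c - x))) := by simp

lemma chernoffBound_eq_zero_of_lt [IsProbabilityMeasure μ] (hle : ∀ᵐ ω ∂μ, X ω ≤ c) {x : ℝ}
    (hx : c < x) : chernoffBound μ X x = 0 := by
  have hlim : Tendsto (fun t : ℝ => ENNReal.ofReal (Real.exp (t * (c - x)))) atTop (𝓝 0) := by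
    simpa using ENNReal.tendsto_ofReal (Real.tendsto_exp_atBot.comp
      (tendsto_id.atTop_mul_const_of_neg (sub_neg.2 hx)))
  exact le_zero_iff.1 (ge_of_tendsto hlim
    ((eventually_gt_atTop 0).mono fun t ht => chernoffBound_le_exp hle ht x))

lemma chernoffBound_le_one [IsProbabilityMeasure μ] (hle : ∀ᵐ ω ∂μ, X ω ≤ c) (x : ℝ) :
    chernoffBound μ X x ≤ 1 := by
  have hlim : Tendsto (fun t : ℝ => ENNReal.ofReal (Real.exp (t * (c - x)))) (𝓝[>] 0) (𝓝 1) := by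
    have hcont : Continuous fun t : ℝ => ENNReal.ofReal (Real.exp (t * (c - x))) :=
      ENNReal.continuous_ofReal.comp (by fun_prop)
    simpa using (hcont.tendsto 0).mono_left nhdsWithin_le_nhds
  exact ge_of_tendsto hlim
    (eventually_mem_nhdsWithin.mono fun t ht => chernoffBound_le_exp hle ht x)

end

section Superlevel

variable {Ω : Type*} [MeasurableSpace Ω] {μ : Measure Ω} [IsProbabilityMeasure μ] {X : Ω → ℝ}
  {c : ℝ}

lemma setOf_le_LF_cramer_eq_Ioi (hX : Measurable X) (hle : ∀ᵐ ω ∂μ, X ω ≤ c) {u : ℝ}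
    (hu : -ENNReal.log (μ {ω | X ω = c}) < u) :
    {x | (u : EReal) ≤ LF (cramer μ X) x} = Ioi c := by
  ext x
  simp only [mem_ofPred_eq, mem_Ioi, LF_cramer_eq_neg_log_chernoffBound]
  refine ⟨fun h => ?_, fun hx => by simp [chernoffBound_eq_zero_of_lt hle hx]⟩
  by_contra! hx
  have := EReal.neg_le_neg_iff.2 (ENNReal.log_monotone (measure_le_chernoffBound (μ := μ) hX hx))
  exact (h.trans this).not_gt hu

lemma setOf_le_LF_cramer_eq_Ici (hX : Measurable X) (hle : ∀ᵐ ω ∂μ, X ω ≤ c)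
    (hp : μ {ω | X ω = c} ≠ 0) (hp1 : μ {ω | X ω = c} < 1) {u : ℝ}
    (hu : (u : EReal) = -ENNReal.log (μ {ω | X ω = c})) :
    {x | (u : EReal) ≤ LF (cramer μ X) x} = Ici c := by
  have hq : μ {ω | X ω = c}ᶜ ≠ 0 := by
    have hs : MeasurableSet {ω | X ω = c} := hX (measurableSet_singleton c)
    rw [prob_compl_eq_one_sub hs]
    exact (tsub_pos_of_lt hp1).ne'
  ext x
  simp only [mem_ofPred_eq, mem_Ici, LF_cramer_eq_neg_log_chernoffBound, hu,
    EReal.neg_le_neg_iff, ENNReal.log_le_log_iff]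
  refine ⟨fun h => ?_, fun hx => ?_⟩
  · by_contra! hx
    exact (measure_lt_chernoffBound hX hx hp hq).not_ge h
  · rcases hx.eq_or_lt with rfl | hx
    · exact chernoffBound_le_measure hX hle
    · simp [chernoffBound_eq_zero_of_lt hle hx]

lemma setOf_nonneg_LF_cramer_eq_univ (hle : ∀ᵐ ω ∂μ, X ω ≤ c) :
    {x | (0 : EReal) ≤ LF (cramer μ X) x} = univ :=
  eq_univ_of_forall fun x => by
    simpa [LF_cramer_eq_neg_log_chernoffBound] using chernoffBound_le_one hle x

end Superlevel

theorem geInv_cramer_at_top_values_general (Ω : Type*) [MeasurableSpace Ω] (μ : Measure Ω)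
    [IsProbabilityMeasure μ] (X : Ω → ℝ) (hX : Measurable X)
    (c : ℝ) (hc : essSup (fun ω => (X ω : EReal)) μ = (c : EReal))
    (hp : 0 < μ {ω | X ω = c}) :
    (∀ u : ℝ, -(ENNReal.log (μ {ω | X ω = c})) < (u : EReal) →
        geInv (cramer μ X) u = (c : EReal)) ∧
      (∀ u : ℝ, (u : EReal) = -(ENNReal.log (μ {ω | X ω = c})) →
        μ {ω | X ω = c} < 1 → geInv (cramer μ X) u = (c : EReal)) ∧
      (μ {ω | X ω = c} = 1 → geInv (cramer μ X) 0 = ⊥) := by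
  have hle : ∀ᵐ ω ∂μ, X ω ≤ c := by
    filter_upwards [ae_le_essSup (f := fun ω => (X ω : EReal))] with ω hω
    exact EReal.coe_le_coe_iff.1 (hc ▸ hω)
  refine ⟨fun u hu => ?_, fun u hu hp1 => ?_, fun _ => ?_⟩
  · rw [geInv, setOf_le_LF_cramer_eq_Ioi hX hle hu, EReal.image_coe_Ioi,
      csInf_Ioo (EReal.coe_lt_top c)]
  · rw [geInv, setOf_le_LF_cramer_eq_Ici hX hle hp.ne' hp1 hu, EReal.image_coe_Ici,
      csInf_Ico (EReal.coe_lt_top c)]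
  · rw [geInv, EReal.coe_zero, setOf_nonneg_LF_cramer_eq_univ hle, image_univ,
      EReal.range_coe_eq_Ioo, csInf_Ioo bot_lt_top]

/-- Lemma, third part. Suppose `x_max = ess sup X = c < ∞` and
`p_max = P(X = c) > 0`. Then `L_X^{*←}(u) = c` for `u > -ln p_max`;
`L_X^{*←}(-ln p_max) = c` if `p_max < 1`; and `L_X^{*←}(-ln p_max) = L_X^{*←}(0) = -∞`
if `p_max = 1`. -/
theorem geInv_cramer_at_top_values (Ω : Type*) [MeasurableSpace Ω] (μ : Measure Ω)
    [IsProbabilityMeasure μ] (X : Ω → ℝ) (hX : Measurable X)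
    (hfin : ∃ t : ℝ, 0 < t ∧ ∫⁻ ω, ENNReal.ofReal (Real.exp (t * X ω)) ∂μ ≠ ⊤)
    (c : ℝ) (hc : essSup (fun ω => (X ω : EReal)) μ = (c : EReal))
    (hp : 0 < μ {ω | X ω = c}) :
    (∀ u : ℝ, -(ENNReal.log (μ {ω | X ω = c})) < (u : EReal) →
        geInv (cramer μ X) u = (c : EReal)) ∧
      (∀ u : ℝ, (u : EReal) = -(ENNReal.log (μ {ω | X ω = c})) →
        μ {ω | X ω = c} < 1 → geInv (cramer μ X) u = (c : EReal)) ∧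
      (μ {ω | X ω = c} = 1 → geInv (cramer μ X) 0 = ⊥) :=
  geInv_cramer_at_top_values_general Ω μ X hX c hc hp
end
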